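/- (Generalised moment generating function bound, Appendix C.) For every integer J ≥ 1 and every λ > 0, (1/n) log 𝔼[exp(λ S_n)] ≤ (1/2) λ² v̄ + λ² K (f_2(λ c_*) − 1/2) − Σ_{j=0}^{J−1} (K_{j+1}/(j+4)!) λ^{j+4} c_*^{j+2} − K_{J+1} λ^{J+4} c_*^{J+2} f_{J+4}(λ c_*), where K_j = (1/n) Σ_{i=1}^n σ_i² (c_i/c_*)(1 − c_i^j/c_*^j) for integers j ≥ 1. -/

import Mathlib

/-!
For `t ≤ v` with `v ≥ 0` one has `exp t ≤ 1 + t + t² f₂(v)`: for `t ≤ 0` because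
`exp t ≤ 1 + t + t²/2` and `f₂(v) ≥ f₂(0) = 1/2`, for `t > 0` because
`exp t = 1 + t + t² f₂(t)` and `f₂` is increasing on `[0, ∞)`. Taking expectations and using
`log x ≤ x - 1` gives `log 𝔼 exp(λ X_i) ≤ λ² σ_i² f₂(λ c_i)`, and by independence the log-mgf
of `S_n` is the sum of these.

It remains to compare `f₂(a u)` with `f₂(u)` for `a = c_i / c✶ ∈ [0, 1]` and `u = λ c✶`.
Expanding both to order `J + 2`, `f_k(w) = ∑_{j<m} w^j/(j+k)! + w^m f_{k+m}(w)`, gives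
`f₂(a u) = 1/2 + a (f₂(u) - 1/2) - ∑_{j<J} a (1 - a^{j+1}) u^{j+2}/(j+4)!
  - u^{J+2} (a f_{J+4}(u) - a^{J+2} f_{J+4}(a u))`,
and `f_{J+4}(a u) ≤ f_{J+4}(u)` bounds the last term. Averaging with weights `σ_i²/n` gives
the theorem.
-/

open MeasureTheory ProbabilityTheory Real Finset

noncomputable def fSeries (k : ℕ) (u : ℝ) : ℝ := ∑' j : ℕ, u ^ j / (Nat.factorial (j + k) : ℝ)

open Nat

lemma summable_fSeries (k : ℕ) (u : ℝ) : Summable fun j : ℕ ↦ u ^ j / ((j + k)! : ℝ) := by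
  refine .of_norm_bounded (Real.summable_pow_div_factorial |u|) fun j ↦ ?_
  rw [norm_div, norm_pow, Real.norm_eq_abs, Real.norm_natCast]
  gcongr
  exact le_add_right j k

lemma fSeries_zero_left (u : ℝ) : fSeries 0 u = exp u := by
  simp [fSeries, Real.exp_eq_exp_ℝ, NormedSpace.exp_eq_tsum_div]

lemma fSeries_eq_sum_add_pow_mul (k m : ℕ) (u : ℝ) :
    fSeries k u = ∑ j ∈ range m, u ^ j / ((j + k)! : ℝ) + u ^ m * fSeries (m + k) u := by
  rw [fSeries, ← (summable_fSeries k u).sum_add_tsum_nat_add m, fSeries, ← tsum_mul_left]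
  congr 1
  refine tsum_congr fun j ↦ ?_
  rw [pow_add, add_assoc]
  ring

lemma fSeries_zero_right (k : ℕ) : fSeries k 0 = ((k ! : ℕ) : ℝ)⁻¹ := by
  simpa using fSeries_eq_sum_add_pow_mul k 1 0

lemma fSeries_monotoneOn (k : ℕ) : MonotoneOn (fSeries k) (Set.Ici 0) :=
  fun _ hw _ _ hwu ↦ (summable_fSeries k _).tsum_le_tsum (fun _ ↦ by gcongr)
    (summable_fSeries k _)

lemma exp_le_quadratic_of_nonpos {t : ℝ} (ht : t ≤ 0) : exp t ≤ 1 + t + t ^ 2 / 2 := by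
  have hderiv (x : ℝ) : HasDerivAt (fun x ↦ 1 + x + x ^ 2 / 2 - exp x) (1 + x - exp x) x := by
    refine ((((hasDerivAt_id x).const_add 1).add ((hasDerivAt_pow 2 x).div_const 2)).sub
      (Real.hasDerivAt_exp x)).congr_deriv ?_
    simp
  have hanti : AntitoneOn (fun x ↦ 1 + x + x ^ 2 / 2 - exp x) (Set.Iic 0) :=
    antitoneOn_of_deriv_nonpos (convex_Iic 0) (by fun_prop)
      (fun x _ ↦ (hderiv x).differentiableAt.differentiableWithinAt)
      fun x _ ↦ by rw [(hderiv x).deriv]; linarith [add_one_le_exp x]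
  have := hanti ht Set.self_mem_Iic ht
  simp only [exp_zero] at this
  linarith

lemma exp_le_one_add_add_sq_mul_fSeries_two {t v : ℝ} (htv : t ≤ v) (hv : 0 ≤ v) :
    exp t ≤ 1 + t + t ^ 2 * fSeries 2 v := by
  rcases le_or_gt t 0 with ht | ht
  · have : (1 : ℝ) / 2 ≤ fSeries 2 v := by
      simpa [fSeries_zero_right] using fSeries_monotoneOn 2 Set.self_mem_Ici hv hv
    nlinarith [exp_le_quadratic_of_nonpos ht, sq_nonneg t]
  · have hexp : exp t = 1 + t + t ^ 2 * fSeries 2 t := by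
      simpa [← fSeries_zero_left, sum_range_succ] using fSeries_eq_sum_add_pow_mul 0 2 t
    rw [hexp]
    gcongr
    exact fSeries_monotoneOn 2 ht.le hv htv

lemma fSeries_two_mul_le {a u : ℝ} (ha₀ : 0 ≤ a) (ha₁ : a ≤ 1) (hu : 0 ≤ u) (J : ℕ) :
    fSeries 2 (a * u) ≤ 1 / 2 + a * (fSeries 2 u - 1 / 2)
      - ∑ j ∈ range J, a * (1 - a ^ (j + 1)) / ((j + 4)! : ℝ) * u ^ (j + 2)
      - a * (1 - a ^ (J + 1)) * u ^ (J + 2) * fSeries (J + 4) u := by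
  have hexpand (w : ℝ) : fSeries 2 w = 1 / 2 + w / 6 + ∑ j ∈ range J, w ^ (j + 2) / ((j + 4)! : ℝ)
      + w ^ (J + 2) * fSeries (J + 4) w := by
    rw [fSeries_eq_sum_add_pow_mul 2 (J + 2), sum_range_succ', sum_range_succ']
    norm_num [factorial]
    ring
  have hsum : ∑ j ∈ range J, (a * u) ^ (j + 2) / ((j + 4)! : ℝ) =
      a * ∑ j ∈ range J, u ^ (j + 2) / ((j + 4)! : ℝ)
        - ∑ j ∈ range J, a * (1 - a ^ (j + 1)) / ((j + 4)! : ℝ) * u ^ (j + 2) := by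
    rw [mul_sum, ← sum_sub_distrib]
    exact sum_congr rfl fun j _ ↦ by ring
  have hmono : fSeries (J + 4) (a * u) ≤ fSeries (J + 4) u :=
    fSeries_monotoneOn _ (mul_nonneg ha₀ hu) hu (mul_le_of_le_one_left hu ha₁)
  rw [hexpand (a * u), hexpand u, hsum, mul_pow]
  have : 0 ≤ a ^ (J + 2) * u ^ (J + 2) := by positivity
  linear_combination mul_le_mul_of_nonneg_left hmono this

lemma sum_mul_fSeries_two_mul_le {ι : Type*} (s : Finset ι) {w a : ι → ℝ}
    (hw : ∀ i ∈ s, 0 ≤ w i) (ha₀ : ∀ i ∈ s, 0 ≤ a i) (ha₁ : ∀ i ∈ s, a i ≤ 1) {u : ℝ}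
    (hu : 0 ≤ u) (J : ℕ) :
    ∑ i ∈ s, w i * fSeries 2 (a i * u) ≤ 1 / 2 * ∑ i ∈ s, w i
      + (∑ i ∈ s, w i * a i) * (fSeries 2 u - 1 / 2)
      - ∑ j ∈ range J, (∑ i ∈ s, w i * a i * (1 - a i ^ (j + 1))) / ((j + 4)! : ℝ)
          * u ^ (j + 2)
      - (∑ i ∈ s, w i * a i * (1 - a i ^ (J + 1))) * u ^ (J + 2) * fSeries (J + 4) u := by
  refine (sum_le_sum fun i hi ↦ mul_le_mul_of_nonneg_left
    (fSeries_two_mul_le (ha₀ i hi) (ha₁ i hi) hu J) (hw i hi)).trans_eq ?_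
  have hj : ∑ j ∈ range J, (∑ i ∈ s, w i * a i * (1 - a i ^ (j + 1))) / ((j + 4)! : ℝ)
        * u ^ (j + 2)
      = ∑ i ∈ s, w i * ∑ j ∈ range J, a i * (1 - a i ^ (j + 1)) / ((j + 4)! : ℝ)
        * u ^ (j + 2) := by
    simp only [sum_div, sum_mul, mul_sum]
    rw [sum_comm]
    exact sum_congr rfl fun i _ ↦ sum_congr rfl fun j _ ↦ by ring
  rw [hj, mul_sum, sum_mul, sum_mul, sum_mul, ← sum_add_distrib, ← sum_sub_distrib,
    ← sum_sub_distrib]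
  exact sum_congr rfl fun i _ ↦ by ring

section Moments

variable {Ω : Type*} [MeasurableSpace Ω] {μ : Measure Ω} [IsProbabilityMeasure μ] {t : ℝ}

lemma mgf_le_one_add_sq_mul_variance_mul_fSeries_two {Y : Ω → ℝ} {c : ℝ} (hY : MemLp Y 2 μ)
    (hmean : μ[Y] = 0) (hc : 0 ≤ c) (hb : ∀ᵐ ω ∂μ, Y ω ≤ c) (ht : 0 ≤ t) :
    mgf Y μ t ≤ 1 + t ^ 2 * variance Y μ * fSeries 2 (t * c) := by
  have hYm : AEMeasurable Y μ := hY.aestronglyMeasurable.aemeasurable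
  have hY₁ : Integrable (fun ω ↦ 1 + t * Y ω) μ :=
    (integrable_const 1).add ((hY.integrable one_le_two).const_mul t)
  have hY₂ : Integrable (fun ω ↦ t ^ 2 * fSeries 2 (t * c) * Y ω ^ 2) μ :=
    hY.integrable_sq.const_mul _
  calc mgf Y μ t ≤ ∫ ω, (1 + t * Y ω + t ^ 2 * fSeries 2 (t * c) * Y ω ^ 2) ∂μ := by
        refine integral_mono_ae (integrable_exp_mul_of_le t c ht hYm hb) (hY₁.add hY₂) ?_
        filter_upwards [hb] with ω hω
        linear_combination exp_le_one_add_add_sq_mul_fSeries_two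
          (mul_le_mul_of_nonneg_left hω ht) (mul_nonneg ht hc)
    _ = 1 + t ^ 2 * variance Y μ * fSeries 2 (t * c) := by
        rw [integral_add hY₁ hY₂, integral_add (integrable_const 1)
          ((hY.integrable one_le_two).const_mul t), integral_const_mul, integral_const_mul,
          hmean, variance_of_integral_eq_zero hYm hmean]
        simp only [integral_const, probReal_univ, smul_eq_mul]
        ring

lemma cgf_le_sq_mul_variance_mul_fSeries_two {Y : Ω → ℝ} {c : ℝ} (hY : MemLp Y 2 μ)
    (hmean : μ[Y] = 0) (hc : 0 ≤ c) (hb : ∀ᵐ ω ∂μ, Y ω ≤ c) (ht : 0 ≤ t) :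
    cgf Y μ t ≤ t ^ 2 * variance Y μ * fSeries 2 (t * c) := by
  have hpos := mgf_pos (integrable_exp_mul_of_le t c ht hY.aestronglyMeasurable.aemeasurable hb)
  rw [cgf]
  linarith [log_le_sub_one_of_pos hpos,
    mgf_le_one_add_sq_mul_variance_mul_fSeries_two hY hmean hc hb ht]

lemma ProbabilityTheory.iIndepFun.cgf_sum_le {ι : Type*} {X : ι → Ω → ℝ} {c : ι → ℝ}
    (hindep : iIndepFun X μ) (hX : ∀ i, MemLp (X i) 2 μ) (hmean : ∀ i, μ[X i] = 0)
    (hc : ∀ i, 0 ≤ c i) (hb : ∀ i, ∀ᵐ ω ∂μ, X i ω ≤ c i) (ht : 0 ≤ t) (s : Finset ι) :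
    cgf (∑ i ∈ s, X i) μ t ≤ ∑ i ∈ s, t ^ 2 * variance (X i) μ * fSeries 2 (t * c i) := by
  have hXm i : AEMeasurable (X i) μ := (hX i).aestronglyMeasurable.aemeasurable
  rw [hindep.cgf_sum₀ hXm fun i _ ↦ integrable_exp_mul_of_le t (c i) ht (hXm i) (hb i)]
  exact sum_le_sum fun i _ ↦
    cgf_le_sq_mul_variance_mul_fSeries_two (hX i) (hmean i) (hc i) (hb i) ht

end Moments

theorem generalised_mgf_bound_general
    {Ω : Type*} [MeasurableSpace Ω] (μ : Measure Ω) [IsProbabilityMeasure μ]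
    (n : ℕ) (X : Fin n → Ω → ℝ) (σ c : Fin n → ℝ) (cstar : ℝ)
    (hindep : iIndepFun X μ)
    (hmean : ∀ i, ∫ ω, X i ω ∂μ = 0)
    (hL2 : ∀ i, MemLp (X i) 2 μ)
    (hvar : ∀ i, variance (X i) μ = σ i ^ 2)
    (hcnonneg : ∀ i, 0 ≤ c i)
    (hbdd : ∀ i, ∀ᵐ ω ∂μ, X i ω ≤ c i)
    (hcmax : ∀ i, c i ≤ cstar) (hcpos : 0 < cstar)
    (v K : ℝ) (Kj : ℕ → ℝ)
    (hv : v = (1 / (n : ℝ)) * ∑ i, σ i ^ 2)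
    (hK : K = (1 / (n : ℝ)) * ∑ i, σ i ^ 2 * (c i / cstar))
    (hKj : ∀ j : ℕ, 1 ≤ j →
      Kj j = (1 / (n : ℝ)) * ∑ i, σ i ^ 2 * (c i / cstar) * (1 - (c i / cstar) ^ j))
    (J : ℕ) (l : ℝ) (hl : 0 < l) :
    Real.log (∫ ω, Real.exp (l * ∑ i, X i ω) ∂μ) / (n : ℝ) ≤
      (1 / 2) * l ^ 2 * v + l ^ 2 * K * (fSeries 2 (l * cstar) - 1 / 2) -
        (∑ j ∈ Finset.range J,
          (Kj (j + 1) / (Nat.factorial (j + 4) : ℝ)) * l ^ (j + 4) * cstar ^ (j + 2)) -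
        Kj (J + 1) * l ^ (J + 4) * cstar ^ (J + 2) * fSeries (J + 4) (l * cstar) := by
  have hcgf : log (∫ ω, exp (l * ∑ i, X i ω) ∂μ) = cgf (∑ i, X i) μ l := by
    simp [cgf, mgf, Finset.sum_apply]
  have hlc i : c i / cstar * (l * cstar) = l * c i := by field_simp
  have hweighted := sum_mul_fSeries_two_mul_le univ (w := fun i ↦ σ i ^ 2)
    (fun i _ ↦ sq_nonneg _) (fun i _ ↦ div_nonneg (hcnonneg i) hcpos.le)
    (fun i _ ↦ div_le_one_of_le₀ (hcmax i) hcpos.le) (mul_nonneg hl.le hcpos.le) J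
  simp only [hlc] at hweighted
  have hsum : ∑ j ∈ range J, Kj (j + 1) / ((j + 4)! : ℝ) * l ^ (j + 4) * cstar ^ (j + 2)
      = l ^ 2 * (1 / n) * ∑ j ∈ range J,
          (∑ i, σ i ^ 2 * (c i / cstar) * (1 - (c i / cstar) ^ (j + 1))) / ((j + 4)! : ℝ)
            * (l * cstar) ^ (j + 2) := by
    rw [mul_sum]
    exact sum_congr rfl fun j _ ↦ by rw [hKj (j + 1) j.succ_pos]; ring
  rw [hcgf, hsum, hv, hK, hKj (J + 1) J.succ_pos]
  calc cgf (∑ i, X i) μ l / n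
      ≤ (∑ i, l ^ 2 * σ i ^ 2 * fSeries 2 (l * c i)) / n := by
        gcongr
        simpa [hvar] using hindep.cgf_sum_le hL2 hmean hcnonneg hbdd hl.le univ
    _ = l ^ 2 * (1 / n) * (∑ i, σ i ^ 2 * fSeries 2 (l * c i)) := by
        rw [mul_sum, sum_div]
        exact sum_congr rfl fun i _ ↦ by ring
    _ ≤ _ := mul_le_mul_of_nonneg_left hweighted (by positivity)
    _ = _ := by ring

/-- **Generalised moment generating function bound** (Appendix C). With the setup of
Lemma 1 and `K_j = (1/n) ∑ i, σ i ² (c i/c✶)(1 − (c i/c✶)^j)`, for every integer `J ≥ 1`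
and every `λ > 0`:
`(1/n) log 𝔼[exp (λ S_n)] ≤ (1/2) λ² v̄ + λ² K (f₂(λ c✶) − 1/2)
  − ∑_{j=0}^{J−1} (K_{j+1}/(j+4)!) λ^{j+4} c✶^{j+2} − K_{J+1} λ^{J+4} c✶^{J+2} f_{J+4}(λ c✶)`. -/
theorem generalised_mgf_bound
    {Ω : Type*} [MeasurableSpace Ω] (μ : Measure Ω) [IsProbabilityMeasure μ]
    (n : ℕ) (hn : 0 < n) (X : Fin n → Ω → ℝ) (σ c : Fin n → ℝ) (cstar : ℝ)
    (hmeas : ∀ i, Measurable (X i))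
    (hindep : iIndepFun X μ)
    (hmean : ∀ i, ∫ ω, X i ω ∂μ = 0)
    (hL2 : ∀ i, MemLp (X i) 2 μ)
    (hvar : ∀ i, variance (X i) μ = σ i ^ 2)
    (hcnonneg : ∀ i, 0 ≤ c i)
    (hbdd : ∀ i, ∀ᵐ ω ∂μ, X i ω ≤ c i)
    (hcmax : ∀ i, c i ≤ cstar) (hcattained : ∃ i, c i = cstar) (hcpos : 0 < cstar)
    (v K : ℝ) (Kj : ℕ → ℝ)
    (hv : v = (1 / (n : ℝ)) * ∑ i, σ i ^ 2)
    (hK : K = (1 / (n : ℝ)) * ∑ i, σ i ^ 2 * (c i / cstar))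
    (hKj : ∀ j : ℕ, 1 ≤ j →
      Kj j = (1 / (n : ℝ)) * ∑ i, σ i ^ 2 * (c i / cstar) * (1 - (c i / cstar) ^ j))
    (J : ℕ) (hJ : 1 ≤ J) (l : ℝ) (hl : 0 < l) :
    Real.log (∫ ω, Real.exp (l * ∑ i, X i ω) ∂μ) / (n : ℝ) ≤
      (1 / 2) * l ^ 2 * v + l ^ 2 * K * (fSeries 2 (l * cstar) - 1 / 2) -
        (∑ j ∈ Finset.range J,
          (Kj (j + 1) / (Nat.factorial (j + 4) : ℝ)) * l ^ (j + 4) * cstar ^ (j + 2)) -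
        Kj (J + 1) * l ^ (J + 4) * cstar ^ (J + 2) * fSeries (J + 4) (l * cstar) :=
  generalised_mgf_bound_general μ n X σ c cstar hindep hmean hL2 hvar hcnonneg hbdd hcmax hcpos v K
    Kj hv hK hKj J l hl
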